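/- arXiv:1306.5571 — 2 statements merged into one kernel-verified Lean document; each statement's English description precedes it below -/
import Mathlib

section
/- If a simple graph G has a vertex cover of size k, then the neighborhood diversity of G is at most 2^k + k. -/
private lemma nd_aux {V : Type*} [Fintype V] [DecidableEq V]
    (G : SimpleGraph V) [DecidableRel G.Adj] {v w u : V}
    (hvw : G.neighborFinset v = G.neighborFinset w)
    (h : G.neighborFinset u \ {v} = G.neighborFinset v \ {u}) :
    G.neighborFinset u \ {w} = G.neighborFinset w \ {u} := by
  by_cases hvweq : v = w
  · subst hvweq; exact h
  have hadjuv : ¬ G.Adj u v := by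
    intro hadj
    have huNw : u ∈ G.neighborFinset w := by
      rw [← hvw, SimpleGraph.mem_neighborFinset]; exact hadj.symm
    have hwNu : w ∈ G.neighborFinset u := by
      rw [SimpleGraph.mem_neighborFinset]
      exact ((SimpleGraph.mem_neighborFinset _ _ _).mp huNw).symm
    have : w ∈ G.neighborFinset v \ {u} := by
      rw [← h]
      simp [hwNu, Ne.symm hvweq]
    have : w ∈ G.neighborFinset w := by
      rw [← hvw]; exact (Finset.mem_sdiff.mp this).1
    exact G.irrefl ((SimpleGraph.mem_neighborFinset _ _ _).mp this)
  have hvNu : v ∉ G.neighborFinset u := by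
    rw [SimpleGraph.mem_neighborFinset]; exact hadjuv
  have huNv : u ∉ G.neighborFinset v := by
    rw [SimpleGraph.mem_neighborFinset]; intro hh; exact hadjuv hh.symm
  have huNw : u ∉ G.neighborFinset w := by rw [← hvw]; exact huNv
  have hwNu : w ∉ G.neighborFinset u := by
    rw [SimpleGraph.mem_neighborFinset]; intro hh
    exact huNw ((SimpleGraph.mem_neighborFinset _ _ _).mpr hh.symm)
  have h1 : G.neighborFinset u = G.neighborFinset v := by
    rw [Finset.sdiff_singleton_eq_erase, Finset.erase_eq_of_notMem hvNu,
      Finset.sdiff_singleton_eq_erase, Finset.erase_eq_of_notMem huNv] at h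
    exact h
  rw [Finset.sdiff_singleton_eq_erase, Finset.erase_eq_of_notMem hwNu,
    Finset.sdiff_singleton_eq_erase, Finset.erase_eq_of_notMem huNw, h1, hvw]

private lemma nd_key {V : Type*} [Fintype V] [DecidableEq V]
    (G : SimpleGraph V) [DecidableRel G.Adj] {v w : V}
    (hvw : G.neighborFinset v = G.neighborFinset w) :
    Finset.univ.filter (fun u : V =>
        G.neighborFinset u \ {v} = G.neighborFinset v \ {u})
      = Finset.univ.filter (fun u : V =>
        G.neighborFinset u \ {w} = G.neighborFinset w \ {u}) := by
  ext u
  simp only [Finset.mem_filter, Finset.mem_univ, true_and]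
  exact ⟨fun h => nd_aux G hvw h, fun h => nd_aux G hvw.symm h⟩

/-- If a simple graph has a vertex cover of size `k`, then its neighborhood
diversity (the number of type classes) is at most `2^k + k`. -/
theorem neighborhoodDiversity_le_of_vertexCover {V : Type*} [Fintype V] [DecidableEq V]
    (G : SimpleGraph V) [DecidableRel G.Adj] (X : Finset V) (k : ℕ)
    (hcov : ∀ a b : V, G.Adj a b → a ∈ X ∨ b ∈ X) (hk : X.card = k) :
    (Finset.univ.image (fun v : V =>
        Finset.univ.filter (fun u : V =>
          G.neighborFinset u \ {v} = G.neighborFinset v \ {u}))).card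
      ≤ 2 ^ k + k := by
  classical
  set f : V → Finset V := fun v => Finset.univ.filter (fun u : V =>
      G.neighborFinset u \ {v} = G.neighborFinset v \ {u}) with hf
  set g : V → V ⊕ Finset V := fun v =>
    if v ∈ X then Sum.inl v else Sum.inr (G.neighborFinset v) with hgdef
  have hg : ∀ v w : V, g v = g w → f v = f w := by
    intro v w h
    simp only [hgdef] at h
    by_cases hv : v ∈ X <;> by_cases hw : w ∈ X <;> simp [hv, hw] at h
    · subst h; rfl
    · exact nd_key G h
  set F : V ⊕ Finset V → Finset V := fun s =>
    if h : ∃ v, g v = s then f h.choose else ∅ with hF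
  have hcomp : ∀ v, F (g v) = f v := by
    intro v
    have hex : ∃ w, g w = g v := ⟨v, rfl⟩
    simp only [hF, dif_pos hex]
    exact hg _ _ hex.choose_spec
  have himg : Finset.univ.image f = (Finset.univ.image g).image F := by
    rw [Finset.image_image]
    apply Finset.image_congr
    intro v _; exact (hcomp v).symm
  rw [himg]
  calc ((Finset.univ.image g).image F).card
      ≤ (Finset.univ.image g).card := Finset.card_image_le
    _ ≤ (X.image Sum.inl ∪ X.powerset.image Sum.inr).card := by
        apply Finset.card_le_card
        intro s hs
        obtain ⟨v, _, rfl⟩ := Finset.mem_image.mp hs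
        by_cases hv : v ∈ X
        · simp only [hgdef, if_pos hv]
          exact Finset.mem_union_left _ (Finset.mem_image_of_mem _ hv)
        · simp only [hgdef, if_neg hv]
          apply Finset.mem_union_right
          apply Finset.mem_image_of_mem
          rw [Finset.mem_powerset]
          intro u hu
          rcases hcov v u ((SimpleGraph.mem_neighborFinset _ _ _).mp hu) with h | h
          · exact absurd h hv
          · exact h
    _ ≤ (X.image Sum.inl).card + (X.powerset.image Sum.inr).card :=
        Finset.card_union_le _ _
    _ ≤ k + 2 ^ k := by
        apply Nat.add_le_add
        · rw [← hk]; exact Finset.card_image_le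
        · calc (X.powerset.image Sum.inr).card ≤ X.powerset.card :=
              Finset.card_image_le
            _ = 2 ^ k := by rw [Finset.card_powerset, hk]
    _ = 2 ^ k + k := Nat.add_comm _ _
end

section
/- Let T_1, …, T_t be finite disjoint nonempty sets with |T_j| = n_j, let c ≥ 1, and let s_1, …, s_r be 'shapes', where each s_i assigns to each index j either a natural number s_i(j) ≤ c or the symbol ⊤ (meaning 'more than c'). Suppose for every j: (a) Σ_{i : s_i(j) ≤ c} s_i(j) + Σ_{i : s_i(j) = ⊤} (c+1) ≤ n_j, and (b) Σ_{i : s_i(j) ≤ c} s_i(j) + Σ_{i : s_i(j) = ⊤} n_j ≥ n_j. Then there exists a partition of T_1 ∪ … ∪ T_t into sets X_1, …, X_r such that for every i and j, |X_i ∩ T_j| = s_i(j) whenever s_i(j) ≤ c, and |X_i ∩ T_j| > c whenever s_i(j) = ⊤. -/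
/-!
For a single type `T j` the problem is purely numerical. If some shape puts `⊤` at `j`, start
from the sizes `s i j`, with `c + 1` for each `⊤`; by (a) they sum to at most `|T j|`, and the
surplus can be given to one `⊤`-entry. If no shape puts `⊤` at `j`, (a) and (b) together force
the fixed sizes to sum to exactly `|T j|`. A finset splits into pieces of any prescribed sizes
that sum to its cardinality, and because the `T j` are disjoint, the pieces chosen inside each
`T j` glue together into the `X i`.
-/

open Finset Function

def FitsShape (c : ℕ) : Option ℕ → ℕ → Prop
  | some m, k => k = m
  | none, k => c < k

theorem exists_sizes_fitsShape {ι : Type*} [Fintype ι] [DecidableEq ι]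
    (c n : ℕ) (o : ι → Option ℕ)
    (ha : ∑ i, (o i).getD (c + 1) ≤ n) (hb : n ≤ ∑ i, (o i).getD n) :
    ∃ f : ι → ℕ, ∑ i, f i = n ∧ ∀ i, FitsShape c (o i) (f i) := by
  set base : ι → ℕ := fun i => (o i).getD (c + 1)
  have base_fits : ∀ i, FitsShape c (o i) (base i) := fun i => by
    cases hi : o i <;> simp [FitsShape, base, hi]
  by_cases hfree : ∃ i₀, o i₀ = none
  · obtain ⟨i₀, hi₀⟩ := hfree
    refine ⟨base + Pi.single i₀ (n - ∑ i, base i), ?_, fun i => ?_⟩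
    · change ∑ i, base i ≤ n at ha
      simp only [Pi.add_apply, sum_add_distrib, sum_pi_single', mem_univ, if_true]
      omega
    · by_cases hi : i = i₀
      · subst hi
        have := base_fits i
        simp only [FitsShape, hi₀, Pi.add_apply, Pi.single_eq_same] at this ⊢
        omega
      · simpa [hi] using base_fits i
  · push Not at hfree
    have hsum : ∑ i, (o i).getD n = ∑ i, base i :=
      sum_congr rfl fun i _ => by
        obtain ⟨m, hm⟩ := Option.ne_none_iff_exists'.mp (hfree i)
        simp [base, hm]
    exact ⟨base, le_antisymm ha (hsum ▸ hb), base_fits⟩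

theorem Finset.exists_partition_card_eq {α ι : Type*} [DecidableEq α] [Fintype ι]
    (S : Finset α) (f : ι → ℕ) (h : ∑ i, f i = #S) :
    ∃ Y : ι → Finset α, Pairwise (Disjoint on Y) ∧ (∀ i, #(Y i) = f i) ∧
      univ.biUnion Y = S := by
  let e : (Σ i, Fin (f i)) ≃ S := Fintype.equivOfCardEq (by simp [h])
  have he : Injective fun p => (e p : α) := Subtype.val_injective.comp e.injective
  refine ⟨fun i => univ.image fun k => (e ⟨i, k⟩ : α), ?_, fun i => ?_, ?_⟩
  · intro i i' hii'
    simp only [onFun, disjoint_left, mem_image, mem_univ, true_and]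
    rintro _ ⟨k, rfl⟩ ⟨k', hk'⟩
    exact hii' (congrArg Sigma.fst (he hk')).symm
  · exact (card_image_of_injective univ (he.comp sigma_mk_injective)).trans (card_fin _)
  · ext x
    simp only [mem_biUnion, mem_image, mem_univ, true_and]
    refine ⟨fun ⟨i, k, hk⟩ => hk ▸ (e ⟨i, k⟩).2, fun hx => ?_⟩
    exact ⟨(e.symm ⟨x, hx⟩).1, (e.symm ⟨x, hx⟩).2, by simp⟩

section Gluing

variable {α κ ι : Type*} [DecidableEq α] [Fintype κ] {T : κ → Finset α}
  {Y : κ → ι → Finset α}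

theorem biUnion_inter_eq_of_pairwise_disjoint (hT : Pairwise (Disjoint on T))
    (hYT : ∀ j i, Y j i ⊆ T j) (i : ι) (j : κ) :
    (univ.biUnion fun j' => Y j' i) ∩ T j = Y j i := by
  ext x
  simp only [mem_inter, mem_biUnion, mem_univ, true_and]
  refine ⟨fun ⟨⟨j', hx⟩, hxT⟩ => ?_, fun hx => ⟨⟨j, hx⟩, hYT j i hx⟩⟩
  obtain rfl : j' = j := hT.eq (not_disjoint_iff.mpr ⟨x, hYT j' i hx, hxT⟩)
  exact hx

theorem pairwise_disjoint_biUnion (hT : Pairwise (Disjoint on T))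
    (hYT : ∀ j i, Y j i ⊆ T j) (hY : ∀ j, Pairwise (Disjoint on Y j)) :
    Pairwise (Disjoint on fun i => univ.biUnion fun j => Y j i) := by
  intro i i' hii'
  simp only [onFun, disjoint_biUnion_left, disjoint_biUnion_right, mem_univ, forall_const]
  intro j' j
  obtain rfl | hjj' := eq_or_ne j j'
  · exact hY j hii'
  · exact (hT hjj').mono (hYT j i) (hYT j' i')

theorem biUnion_biUnion_swap [Fintype ι] (hY : ∀ j, univ.biUnion (Y j) = T j) :
    (univ.biUnion fun i => univ.biUnion fun j => Y j i) = univ.biUnion T := by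
  ext x
  simp only [mem_biUnion, mem_univ, true_and, ← hY]
  exact exists_comm

end Gluing

theorem shapes_realizable_general {α : Type*} [DecidableEq α] {t r : ℕ}
    (T : Fin t → Finset α)
    (hdisj : ∀ j j' : Fin t, j ≠ j' → Disjoint (T j) (T j'))
    (c : ℕ)
    (s : Fin r → Fin t → Option ℕ)
    (ha : ∀ j : Fin t, (∑ i, (s i j).getD (c + 1)) ≤ (T j).card)
    (hb : ∀ j : Fin t, (T j).card ≤ ∑ i, (s i j).getD ((T j).card)) :
    ∃ X : Fin r → Finset α,
      (∀ i i' : Fin r, i ≠ i' → Disjoint (X i) (X i')) ∧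
      Finset.univ.biUnion X = Finset.univ.biUnion T ∧
      (∀ (i : Fin r) (j : Fin t) (m : ℕ), s i j = some m → (X i ∩ T j).card = m) ∧
      (∀ (i : Fin r) (j : Fin t), s i j = none → c < (X i ∩ T j).card) := by
  choose f hfsum hfits using fun j => exists_sizes_fitsShape c #(T j) (s · j) (ha j) (hb j)
  choose Y hYdisj hYcard hYunion using fun j => (T j).exists_partition_card_eq (f j) (hfsum j)
  have hYT : ∀ j i, Y j i ⊆ T j := fun j i => hYunion j ▸ subset_biUnion_of_mem (Y j) (mem_univ i)
  have hXT := biUnion_inter_eq_of_pairwise_disjoint hdisj hYT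
  refine ⟨fun i => univ.biUnion fun j => Y j i, pairwise_disjoint_biUnion hdisj hYT hYdisj,
    biUnion_biUnion_swap hYunion, fun i j m hm => ?_, fun i j hm => ?_⟩
  · simpa [hXT, hYcard, hm, FitsShape] using hfits j i
  · simpa [hXT, hYcard, hm, FitsShape] using hfits j i

/-- The abstract combinatorial lemma underlying the ILP formulation for MSO
partitioning.  Given disjoint nonempty finite sets `T 1, …, T t` and shapes
`s 1, …, s r` (where `s i j = some m` fixes the intersection size `m ≤ c`, and
`s i j = none` means "more than `c`"), conditions (a) and (b) guarantee the
existence of a partition `X 1, …, X r` of `⋃ T j` realizing all the shapes. -/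
theorem shapes_realizable {α : Type*} [DecidableEq α] {t r : ℕ}
    (T : Fin t → Finset α)
    (hdisj : ∀ j j' : Fin t, j ≠ j' → Disjoint (T j) (T j'))
    (hne : ∀ j : Fin t, (T j).Nonempty)
    (c : ℕ) (hc : 1 ≤ c)
    (s : Fin r → Fin t → Option ℕ)
    (hcap : ∀ (i : Fin r) (j : Fin t) (m : ℕ), s i j = some m → m ≤ c)
    (ha : ∀ j : Fin t, (∑ i, (s i j).getD (c + 1)) ≤ (T j).card)
    (hb : ∀ j : Fin t, (T j).card ≤ ∑ i, (s i j).getD ((T j).card)) :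
    ∃ X : Fin r → Finset α,
      (∀ i i' : Fin r, i ≠ i' → Disjoint (X i) (X i')) ∧
      Finset.univ.biUnion X = Finset.univ.biUnion T ∧
      (∀ (i : Fin r) (j : Fin t) (m : ℕ), s i j = some m → (X i ∩ T j).card = m) ∧
      (∀ (i : Fin r) (j : Fin t), s i j = none → c < (X i ∩ T j).card) :=
  shapes_realizable_general T hdisj c s ha hb
end
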